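/- There exists an absolute constant C > 0 such that the following holds. Let A' ⊂ ℤ\{0} be a finite symmetric set and let L ≥ 1 satisfy 1̂_{A'}(x) + L ≥ 0 for all x ∈ 𝕋. Let t ∈ ℤ\{0}, and set A'_t := A' ∩ (A'+t) and B'_t := A'_t \ (−A'_t). Then one can write 1̂_{B'_t}(x) = Q₁(x) + Q₂(x) for functions Q₁, Q₂ : 𝕋 → ℂ satisfying |Q₁(x)| ≤ 4(1̂_{A'}(x) + L) for all x ∈ 𝕋 and ‖Q₂‖_∞ ≤ C·L³. -/

import Mathlib

/-- `e(x) = e^{2πix}`. -/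
noncomputable def eC (x : ℝ) : ℂ := Complex.exp (2 * Real.pi * Complex.I * x)

/-- `1̂_A(x) = ∑_{a ∈ A} e(ax)`. -/
noncomputable def fhat (A : Finset ℤ) (x : ℝ) : ℂ := ∑ a ∈ A, eC ((a : ℝ) * x)

/-- The translate `A + t`. -/
def shiftS (A : Finset ℤ) (t : ℤ) : Finset ℤ := A.image (· + t)

/-- The reflection `-A`. -/
def negS (A : Finset ℤ) : Finset ℤ := A.image (fun a => -a)

/-!
Put `P = 1̂_{A'} + 2L`. Since `1̂_{A'}` is real and `≥ -L`, `|1̂_{A'}| ≤ P`, and as `0 ∉ A'` the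
trigonometric polynomial `P` has `∫ P = 2L` and `P * P = 1̂_{A'} + 4L²` (convolution on `𝕋`).
Intersections of sets are convolutions of their indicator transforms, and translation does not
change `|1̂|`; so `|1̂_{A'_t}| ≤ P * P`, and, using `A'_t ∩ (-A'_t) = A' ∩ (A'+t) ∩ (A'-t)`,
`|1̂_{A'_t ∩ (-A'_t)}| ≤ P * (P * P)`. Hence `|1̂_{B'_t}| ≤ 2(1̂_{A'} + L) + 16L³`, and one puts
`1̂_{B'_t}` into `Q₁` where `1̂_{A'} + L ≥ 8L³` and into `Q₂` elsewhere.
-/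

open Finset intervalIntegral

lemma eC_add (x y : ℝ) : eC (x + y) = eC x * eC y := by
  simp only [eC, ← Complex.exp_add, Complex.ofReal_add]
  ring_nf

lemma norm_eC (x : ℝ) : ‖eC x‖ = 1 := by
  simp [eC, Complex.norm_exp]

@[fun_prop]
lemma continuous_eC : Continuous eC := by
  unfold eC
  fun_prop

lemma conj_eC (x : ℝ) : (starRingEnd ℂ) (eC x) = eC (-x) := by
  simp only [eC, ← Complex.exp_conj, map_mul, Complex.conj_I, Complex.conj_ofReal, map_ofNat,
    Complex.ofReal_neg]
  ring_nf

lemma integral_eC_int_mul (n : ℤ) :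
    ∫ y in (0 : ℝ)..1, eC (n * y) = if n = 0 then 1 else 0 := by
  split_ifs with hn
  · simp [hn, eC]
  have hc : 2 * Real.pi * Complex.I * n ≠ 0 := by simp [Real.pi_ne_zero, hn]
  have hexp : ∀ y : ℝ, eC (n * y) = Complex.exp (2 * Real.pi * Complex.I * n * y) := by
    intro y
    simp only [eC, Complex.ofReal_mul, Complex.ofReal_intCast]
    ring_nf
  simp only [hexp, integral_exp_mul_complex hc, Complex.ofReal_one, Complex.ofReal_zero, mul_one,
    mul_zero, Complex.exp_zero]
  rw [show 2 * Real.pi * Complex.I * n = n * (2 * Real.pi * Complex.I) by ring,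
    Complex.exp_int_mul_two_pi_mul_I, sub_self, zero_div]

@[fun_prop]
lemma continuous_fhat (A : Finset ℤ) : Continuous (fhat A) := by
  unfold fhat
  fun_prop

lemma fhat_singleton_zero (x : ℝ) : fhat {0} x = 1 := by
  simp [fhat, eC]

lemma mem_shiftS {A : Finset ℤ} {t m : ℤ} : m ∈ shiftS A t ↔ m - t ∈ A := by
  simp [shiftS, sub_eq_add_neg]

lemma mem_negS {A : Finset ℤ} {m : ℤ} : m ∈ negS A ↔ -m ∈ A := by
  simp [negS, neg_eq_iff_eq_neg]

lemma fhat_shiftS (A : Finset ℤ) (t : ℤ) (x : ℝ) : fhat (shiftS A t) x = eC (t * x) * fhat A x := by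
  rw [fhat, shiftS, sum_image (fun a _ b _ h => add_right_cancel h), fhat, mul_sum]
  refine sum_congr rfl fun a _ => ?_
  rw [← eC_add]
  push_cast
  ring_nf

lemma norm_fhat_shiftS (A : Finset ℤ) (t : ℤ) (x : ℝ) : ‖fhat (shiftS A t) x‖ = ‖fhat A x‖ := by
  rw [fhat_shiftS, norm_mul, norm_eC, one_mul]

lemma ofReal_re_fhat {A : Finset ℤ} (hsym : ∀ a : ℤ, a ∈ A ↔ -a ∈ A) (x : ℝ) :
    ((fhat A x).re : ℂ) = fhat A x := by
  refine Complex.conj_eq_iff_re.mp ?_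
  rw [fhat, map_sum]
  refine sum_nbij' (fun a => -a) (fun a => -a) (fun a ha => (hsym a).mp ha)
    (fun a ha => (hsym a).mp ha) (fun a _ => neg_neg a) (fun a _ => neg_neg a) fun a _ => ?_
  rw [conj_eC]
  push_cast
  ring_nf

lemma fhat_sdiff (S T : Finset ℤ) (x : ℝ) : fhat (S \ T) x = fhat S x - fhat (S ∩ T) x := by
  rw [← sdiff_inter_self_left, fhat, sum_sdiff_eq_sub inter_subset_left, fhat, fhat]

lemma integral_fhat_mul_fhat_sub (A B : Finset ℤ) (x : ℝ) :
    ∫ y in (0 : ℝ)..1, fhat A y * fhat B (x - y) = fhat (A ∩ B) x := by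
  have hexpand : ∀ y : ℝ, fhat A y * fhat B (x - y)
      = ∑ b ∈ B, ∑ a ∈ A, eC (b * x) * eC ((a - b : ℤ) * y) := by
    intro y
    rw [fhat, fhat, sum_mul_sum, sum_comm]
    refine sum_congr rfl fun b _ => sum_congr rfl fun a _ => ?_
    rw [← eC_add, ← eC_add]
    push_cast
    ring_nf
  have hcont (b a : ℤ) : Continuous fun y : ℝ => eC (b * x) * eC ((a - b : ℤ) * y) := by
    fun_prop
  simp_rw [hexpand]
  rw [integral_finsetSum fun b _ =>
    (continuous_finsetSum A fun a _ => hcont b a).intervalIntegrable _ _]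
  simp_rw [integral_finsetSum fun a _ => (hcont _ a).intervalIntegrable _ _, integral_const_mul,
    integral_eC_int_mul, sub_eq_zero, mul_ite, mul_one, mul_zero, sum_ite_eq', ← sum_filter,
    filter_mem_eq_inter, inter_comm B A]
  rfl

lemma integral_fhat {A : Finset ℤ} (h0 : (0 : ℤ) ∉ A) : ∫ y in (0 : ℝ)..1, fhat A y = 0 := by
  have h := integral_fhat_mul_fhat_sub A {0} 0
  simp_rw [fhat_singleton_zero, mul_one, inter_singleton_of_notMem h0] at h
  simpa [fhat] using h

lemma integral_fhat_sub {A : Finset ℤ} (h0 : (0 : ℤ) ∉ A) (x : ℝ) :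
    ∫ y in (0 : ℝ)..1, fhat A (x - y) = 0 := by
  have h := integral_fhat_mul_fhat_sub {0} A x
  simp_rw [fhat_singleton_zero, one_mul, singleton_inter_of_notMem h0] at h
  simpa [fhat] using h

lemma norm_fhat_inter_le (A B : Finset ℤ) {P Q : ℝ → ℝ} (hP : Continuous P) (hQ : Continuous Q)
    (hP0 : ∀ y, 0 ≤ P y) (hA : ∀ y, ‖fhat A y‖ ≤ P y) (hB : ∀ y, ‖fhat B y‖ ≤ Q y) (x : ℝ) :
    ‖fhat (A ∩ B) x‖ ≤ ∫ y in (0 : ℝ)..1, P y * Q (x - y) := by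
  rw [← integral_fhat_mul_fhat_sub]
  refine (norm_integral_le_integral_norm zero_le_one).trans <|
    integral_mono_on zero_le_one ((by fun_prop : Continuous _).intervalIntegrable _ _)
      ((by fun_prop : Continuous _).intervalIntegrable _ _) fun y _ => ?_
  rw [norm_mul]
  exact mul_le_mul (hA y) (hB (x - y)) (norm_nonneg _) (hP0 y)

noncomputable def majorant (A : Finset ℤ) (L x : ℝ) : ℝ := (fhat A x).re + 2 * L

section Majorant

variable {A : Finset ℤ} {L : ℝ}

@[fun_prop]
lemma continuous_majorant : Continuous (majorant A L) := by
  unfold majorant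
  fun_prop

lemma norm_fhat_le_majorant (hsym : ∀ a : ℤ, a ∈ A ↔ -a ∈ A) (hL : 0 ≤ L)
    (hpos : ∀ x : ℝ, 0 ≤ (fhat A x).re + L) (x : ℝ) : ‖fhat A x‖ ≤ majorant A L x := by
  rw [← ofReal_re_fhat hsym, Complex.norm_real, Real.norm_eq_abs, majorant, abs_le]
  constructor <;> linarith [hpos x]

lemma majorant_nonneg (hsym : ∀ a : ℤ, a ∈ A ↔ -a ∈ A) (hL : 0 ≤ L)
    (hpos : ∀ x : ℝ, 0 ≤ (fhat A x).re + L) (x : ℝ) : 0 ≤ majorant A L x :=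
  (norm_nonneg _).trans (norm_fhat_le_majorant hsym hL hpos x)

lemma norm_fhat_shiftS_le_majorant (hsym : ∀ a : ℤ, a ∈ A ↔ -a ∈ A) (hL : 0 ≤ L)
    (hpos : ∀ x : ℝ, 0 ≤ (fhat A x).re + L) (t : ℤ) (x : ℝ) :
    ‖fhat (shiftS A t) x‖ ≤ majorant A L x :=
  norm_fhat_shiftS A t x ▸ norm_fhat_le_majorant hsym hL hpos x

lemma ofReal_majorant (hsym : ∀ a : ℤ, a ∈ A ↔ -a ∈ A) (x : ℝ) :
    (majorant A L x : ℂ) = fhat A x + 2 * L := by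
  push_cast [majorant, ofReal_re_fhat hsym]
  rfl

lemma integral_majorant (h0 : (0 : ℤ) ∉ A) (hsym : ∀ a : ℤ, a ∈ A ↔ -a ∈ A) :
    ∫ y in (0 : ℝ)..1, majorant A L y = 2 * L := by
  apply Complex.ofReal_injective
  rw [← integral_ofReal]
  simp_rw [ofReal_majorant hsym]
  rw [integral_add ((continuous_fhat A).intervalIntegrable _ _) intervalIntegrable_const,
    integral_fhat h0]
  simp

lemma integral_majorant_mul_majorant_sub (h0 : (0 : ℤ) ∉ A) (hsym : ∀ a : ℤ, a ∈ A ↔ -a ∈ A)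
    (x : ℝ) :
    ∫ y in (0 : ℝ)..1, majorant A L y * majorant A L (x - y) = (fhat A x).re + (2 * L) ^ 2 := by
  apply Complex.ofReal_injective
  have hexpand : ∀ y : ℝ, (majorant A L y * majorant A L (x - y) : ℂ)
      = fhat A y * fhat A (x - y)
        + (2 * L * fhat A y + (2 * L * fhat A (x - y) + (2 * L) ^ 2)) := by
    intro y
    rw [ofReal_majorant hsym, ofReal_majorant hsym]
    ring
  have hi {f : ℝ → ℂ} (hf : Continuous f) : IntervalIntegrable f MeasureTheory.volume 0 1 :=
    hf.intervalIntegrable _ _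
  rw [← integral_ofReal]
  push_cast
  simp_rw [hexpand]
  rw [integral_add (hi (by fun_prop)) (hi (by fun_prop)), integral_add (hi (by fun_prop))
      (hi (by fun_prop)), integral_add (hi (by fun_prop)) intervalIntegrable_const,
    integral_const_mul, integral_const_mul, integral_fhat_mul_fhat_sub, inter_self,
    integral_fhat h0, integral_fhat_sub h0, ofReal_re_fhat hsym]
  simp

lemma norm_fhat_inter_le_of_le_majorant {B C : Finset ℤ} (h0 : (0 : ℤ) ∉ A)
    (hsym : ∀ a : ℤ, a ∈ A ↔ -a ∈ A) (hL : 0 ≤ L) (hpos : ∀ x : ℝ, 0 ≤ (fhat A x).re + L)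
    (hB : ∀ y, ‖fhat B y‖ ≤ majorant A L y) (hC : ∀ y, ‖fhat C y‖ ≤ majorant A L y) (x : ℝ) :
    ‖fhat (B ∩ C) x‖ ≤ (fhat A x).re + (2 * L) ^ 2 :=
  (norm_fhat_inter_le B C continuous_majorant continuous_majorant
    (majorant_nonneg hsym hL hpos) hB hC x).trans_eq (integral_majorant_mul_majorant_sub h0 hsym x)

lemma norm_fhat_inter_inter_shiftS_le (h0 : (0 : ℤ) ∉ A) (hsym : ∀ a : ℤ, a ∈ A ↔ -a ∈ A)
    (hL : 0 ≤ L) (hpos : ∀ x : ℝ, 0 ≤ (fhat A x).re + L) (s r : ℤ) (x : ℝ) :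
    ‖fhat (A ∩ (shiftS A s ∩ shiftS A r)) x‖
      ≤ (fhat A x).re + (2 * L) ^ 2 + (2 * L) ^ 2 * (2 * L) := by
  have hinner (u : ℝ) : ‖fhat (shiftS A s ∩ shiftS A r) u‖ ≤ majorant A L u + (2 * L) ^ 2 := by
    refine (norm_fhat_inter_le_of_le_majorant h0 hsym hL hpos
      (norm_fhat_shiftS_le_majorant hsym hL hpos s) (norm_fhat_shiftS_le_majorant hsym hL hpos r)
      u).trans ?_
    rw [majorant]
    linarith
  calc ‖fhat (A ∩ (shiftS A s ∩ shiftS A r)) x‖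
      ≤ ∫ y in (0 : ℝ)..1, majorant A L y * (majorant A L (x - y) + (2 * L) ^ 2) :=
        norm_fhat_inter_le _ _ continuous_majorant (by fun_prop) (majorant_nonneg hsym hL hpos)
          (norm_fhat_le_majorant hsym hL hpos) hinner x
    _ = (fhat A x).re + (2 * L) ^ 2 + (2 * L) ^ 2 * (2 * L) := by
        simp_rw [mul_add]
        rw [integral_add ((by fun_prop : Continuous _).intervalIntegrable _ _)
            ((by fun_prop : Continuous _).intervalIntegrable _ _), integral_mul_const,
          integral_majorant_mul_majorant_sub h0 hsym, integral_majorant h0 hsym]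
        ring

end Majorant

lemma inter_shiftS_inter_negS {A : Finset ℤ} (hsym : ∀ a : ℤ, a ∈ A ↔ -a ∈ A) (t : ℤ) :
    A ∩ shiftS A t ∩ negS (A ∩ shiftS A t) = A ∩ (shiftS A t ∩ shiftS A (-t)) := by
  ext m
  simp only [mem_inter, mem_shiftS, mem_negS, ← hsym, show -m - t = -(m - -t) by ring]
  tauto

lemma norm_fhat_inter_shiftS_sdiff_negS_le {A : Finset ℤ} {L : ℝ} (h0 : (0 : ℤ) ∉ A)
    (hsym : ∀ a : ℤ, a ∈ A ↔ -a ∈ A) (hL : 1 ≤ L) (hpos : ∀ x : ℝ, 0 ≤ (fhat A x).re + L)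
    (t : ℤ) (x : ℝ) :
    ‖fhat ((A ∩ shiftS A t) \ negS (A ∩ shiftS A t)) x‖
      ≤ 2 * ((fhat A x).re + L) + 2 * (8 * L ^ 3) := by
  have hL0 : 0 ≤ L := zero_le_one.trans hL
  have hS := norm_fhat_inter_le_of_le_majorant h0 hsym hL0 hpos
    (norm_fhat_le_majorant hsym hL0 hpos) (norm_fhat_shiftS_le_majorant hsym hL0 hpos t) x
  have hT := norm_fhat_inter_inter_shiftS_le h0 hsym hL0 hpos t (-t) x
  rw [← inter_shiftS_inter_negS hsym] at hT
  rw [fhat_sdiff]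
  refine (norm_sub_le _ _).trans ?_
  nlinarith

lemma exists_add_of_norm_le {α E : Type*} [SeminormedAddCommGroup E] {f : α → E} {a : α → ℝ}
    {K : ℝ} (ha : ∀ x, 0 ≤ a x) (hK : 0 ≤ K) (hf : ∀ x, ‖f x‖ ≤ 2 * a x + 2 * K) :
    ∃ Q₁ Q₂ : α → E, (∀ x, f x = Q₁ x + Q₂ x) ∧ (∀ x, ‖Q₁ x‖ ≤ 4 * a x) ∧ ∀ x, ‖Q₂ x‖ ≤ 4 * K := by
  classical
  refine ⟨fun x => if K ≤ a x then f x else 0, fun x => if K ≤ a x then 0 else f x,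
    fun x => by dsimp only; split_ifs <;> simp, fun x => ?_, fun x => ?_⟩
  · dsimp only
    split_ifs with h
    · linarith [hf x]
    · simpa using mul_nonneg zero_le_four (ha x)
  · dsimp only
    split_ifs with h
    · simpa using hK
    · linarith [hf x, not_le.mp h]

/-- Decomposition `1̂_{B'_t} = Q₁ + Q₂` with `|Q₁| ≤ 4(1̂_{A'} + L)` pointwise and
`‖Q₂‖_∞ ≤ C·L³`, where `B'_t = (A' ∩ (A'+t)) \ (-(A' ∩ (A'+t)))`. -/
theorem Bt_decomposition :
    ∃ C : ℝ, 0 < C ∧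
      ∀ A' : Finset ℤ, (0 : ℤ) ∉ A' → (∀ a : ℤ, a ∈ A' ↔ -a ∈ A') →
        ∀ L : ℝ, 1 ≤ L → (∀ x : ℝ, 0 ≤ (fhat A' x).re + L) →
          ∀ t : ℤ, t ≠ 0 →
            ∃ Q₁ Q₂ : ℝ → ℂ,
              (∀ x : ℝ, fhat ((A' ∩ shiftS A' t) \ negS (A' ∩ shiftS A' t)) x
                  = Q₁ x + Q₂ x) ∧
              (∀ x : ℝ, ‖Q₁ x‖ ≤ 4 * ((fhat A' x).re + L)) ∧
              (∀ x : ℝ, ‖Q₂ x‖ ≤ C * L ^ 3) := by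
  refine ⟨32, by norm_num, fun A' h0 hsym L hL hpos t _ => ?_⟩
  obtain ⟨Q₁, Q₂, hsplit, hQ₁, hQ₂⟩ := exists_add_of_norm_le hpos (by positivity)
    (norm_fhat_inter_shiftS_sdiff_negS_le h0 hsym hL hpos t)
  exact ⟨Q₁, Q₂, hsplit, hQ₁, fun x => (hQ₂ x).trans_eq (by ring)⟩
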